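/- Suppose λ = 0 and B_s = ∅, so h(U) = (1/(|N|·K)) Σ_{n∈N} M^K(n,U), and suppose K·|N| ≤ m ≤ |B_u|. Then max{ h(U) : U ⊆ B_u, |U| = m } = h(B_u). Moreover, any U ⊆ B_u with |U| = m satisfying M^K(n,U) = M^K(n,B_u) for every n ∈ N attains this maximum, and such a U exists (in particular, the greedy algorithm that repeatedly adds, cycling over the novel classes, an unchosen base class of maximal similarity to the current novel class returns an optimal solution). -/

import Mathlib

/-- The max-K-sum `M^K(A)`: the sum of the `K` largest values of `w` over the
finite set `A` (the sum of all of them if `|A| < K`). -/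
noncomputable def topKSum {α : Type*} (w : α → ℝ) (K : ℕ) (A : Finset α) : ℝ :=
  (((A.val.map w).sort (· ≥ ·)).take K).sum

/-- The selection objective
`h(U) = (1/(|N|·K)) Σ_{n∈N} M^K(n, B_s ∪ U) − (λ/(|N|·(|B_s|+m))) Σ_{n∈N} Σ_{u∈B_s∪U} f(n,u)`. -/
noncomputable def selObj {β ν : Type*} [DecidableEq β]
    (N : Finset ν) (f : ν → β → ℝ) (K : ℕ) (Bs : Finset β) (lam : ℝ) (m : ℕ)
    (U : Finset β) : ℝ :=
  (1 / ((N.card : ℝ) * (K : ℝ))) * ∑ n ∈ N, topKSum (f n) K (Bs ∪ U)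
    - (lam / ((N.card : ℝ) * ((Bs.card : ℝ) + (m : ℝ)))) * ∑ n ∈ N, ∑ u ∈ Bs ∪ U, f n u

/-! For nonnegative weights, `M^K(A)` is the largest sum of `w` over a subset of `A` with at most
`K` elements, attained by the elements carrying the `K` largest values. Hence `M^K` is monotone in
`A`, which gives `h(U) ≤ h(B_u)`. Conversely the union over `n ∈ N` of these top-`K` sets has at
most `K·|N| ≤ m` elements; any `U` of size `m` between it and `B_u` keeps every `M^K(n, B_u)`. -/

theorem List.sum_le_sum_take_of_pairwise {M : Type*} [AddCommMonoid M] [LinearOrder M]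
    [IsOrderedAddMonoid M] {l : List M} (hl : l.Pairwise (· ≥ ·)) (hl₀ : ∀ x ∈ l, 0 ≤ x)
    {u : Multiset M} (hu : u ≤ l) {K : ℕ} (hK : Multiset.card u ≤ K) :
    u.sum ≤ (l.take K).sum := by
  induction l generalizing u K with
  | nil => simp [Multiset.le_zero.1 hu]
  | cons a t ih =>
    obtain ⟨hat, ht⟩ := List.pairwise_cons.1 hl
    rcases Multiset.empty_or_exists_mem u with rfl | ⟨x, hx⟩
    · exact (List.sum_nonneg fun y hy => hl₀ y (List.mem_of_mem_take hy)).trans_eq' (by simp)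
    obtain ⟨k, rfl⟩ : ∃ k, K = k + 1 :=
      Nat.exists_eq_add_one.2 (lt_of_lt_of_le (Multiset.card_pos_iff_exists_mem.2 ⟨x, hx⟩) hK)
    -- Either `u` contains the head `a`, or any of its elements, being `≤ a`, can take its place.
    obtain ⟨y, hy, hya, hyt⟩ : ∃ y ∈ u, y ≤ a ∧ u.erase y ≤ (t : Multiset M) := by
      by_cases ha : a ∈ u
      · refine ⟨a, ha, le_rfl, ?_⟩
        simpa using Multiset.erase_le_erase a hu
      · have hut : u ≤ (t : Multiset M) := by
          rwa [← Multiset.cons_coe, Multiset.le_cons_of_notMem ha] at hu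
        exact ⟨x, hx, hat x (Multiset.mem_of_le hut hx), (Multiset.erase_le x u).trans hut⟩
    have hcard : Multiset.card (u.erase y) ≤ k := by
      rw [Multiset.card_erase_of_mem hy, Nat.pred_eq_sub_one]; omega
    rw [← Multiset.cons_erase hy, Multiset.sum_cons, List.take_succ_cons, List.sum_cons]
    exact add_le_add hya (ih ht (fun z hz => hl₀ z (List.mem_cons_of_mem a hz)) hyt hcard)

theorem Multiset.exists_le_map_eq {α β : Type*} {f : α → β} {s : Multiset α} {u : Multiset β}
    (h : u ≤ s.map f) : ∃ v ≤ s, v.map f = u := by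
  induction s using Quotient.inductionOn
  induction u using Quotient.inductionOn
  obtain ⟨l, hperm, hsub⟩ := Multiset.coe_le.1 h
  obtain ⟨l', hl', rfl⟩ := List.sublist_map_iff.1 hsub
  exact ⟨l', Multiset.coe_le.2 hl'.subperm, Multiset.coe_eq_coe.2 hperm⟩

section topKSum

variable {α : Type*} (w : α → ℝ) (K : ℕ)

theorem sum_le_topKSum {S A : Finset α} (hSA : S ⊆ A) (hS : S.card ≤ K)
    (hw : ∀ a ∈ A, 0 ≤ w a) : ∑ a ∈ S, w a ≤ topKSum w K A := by
  refine List.sum_le_sum_take_of_pairwise (Multiset.pairwise_sort _ _) ?_ ?_ (by simpa using hS)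
  · intro x hx
    obtain ⟨a, ha, rfl⟩ := Multiset.mem_map.1 ((Multiset.mem_sort _).1 hx)
    exact hw a ha
  · rw [Multiset.sort_eq]
    exact Multiset.map_le_map (Finset.val_le_iff.2 hSA)

theorem exists_subset_card_le_sum_eq_topKSum (A : Finset α) :
    ∃ S ⊆ A, S.card ≤ K ∧ ∑ a ∈ S, w a = topKSum w K A := by
  have htake : ((((A.val.map w).sort (· ≥ ·)).take K : List ℝ) : Multiset ℝ) ≤ A.val.map w := by
    conv_rhs => rw [← Multiset.sort_eq (A.val.map w) (· ≥ ·)]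
    exact Multiset.coe_le.2 (List.take_sublist _ _).subperm
  obtain ⟨v, hv, hvw⟩ := Multiset.exists_le_map_eq htake
  refine ⟨⟨v, Multiset.nodup_of_le hv A.nodup⟩, Finset.val_le_iff.1 hv, ?_, ?_⟩
  · change Multiset.card v ≤ K
    rw [← Multiset.card_map w, hvw, Multiset.coe_card]
    exact List.length_take_le _ _
  · simp [Finset.sum, hvw, topKSum]

theorem topKSum_mono {A B : Finset α} (hAB : A ⊆ B) (hw : ∀ b ∈ B, 0 ≤ w b) :
    topKSum w K A ≤ topKSum w K B := by
  obtain ⟨S, hSA, hS, hsum⟩ := exists_subset_card_le_sum_eq_topKSum w K A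
  exact hsum ▸ sum_le_topKSum w K (hSA.trans hAB) hS hw

end topKSum

theorem exists_subset_card_eq_forall_topKSum_eq {α ν : Type*} [DecidableEq α] (N : Finset ν)
    (w : ν → α → ℝ) (K : ℕ) {B : Finset α} {m : ℕ} (hw : ∀ n ∈ N, ∀ b ∈ B, 0 ≤ w n b)
    (hNm : K * N.card ≤ m) (hmB : m ≤ B.card) :
    ∃ U ⊆ B, U.card = m ∧ ∀ n ∈ N, topKSum (w n) K U = topKSum (w n) K B := by
  choose! S hSB hSK hSsum using fun n (_ : n ∈ N) => exists_subset_card_le_sum_eq_topKSum (w n) K B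
  have hcard : (N.biUnion S).card ≤ m :=
    (Finset.card_biUnion_le_card_mul N S K hSK).trans (by rwa [mul_comm])
  obtain ⟨U, hSU, hUB, hU⟩ :=
    Finset.exists_subsuperset_card_eq (Finset.biUnion_subset.2 hSB) hcard hmB
  refine ⟨U, hUB, hU, fun n hn => le_antisymm (topKSum_mono _ K hUB (hw n hn)) ?_⟩
  rw [← hSsum n hn]
  exact sum_le_topKSum _ K ((Finset.subset_biUnion_of_mem S hn).trans hSU) (hSK n hn)
    fun b hb => hw n hn b (hUB hb)

theorem selObj_max_eq_of_large_m_general {β ν : Type*} [DecidableEq β]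
    (Bu : Finset β) (N : Finset ν) (f : ν → β → ℝ) (K m : ℕ)
    (hf : ∀ n ∈ N, ∀ b ∈ Bu, 0 ≤ f n b)
    (hm1 : K * N.card ≤ m) (hm2 : m ≤ Bu.card) :
    (∀ U ⊆ Bu, U.card = m → selObj N f K ∅ 0 m U ≤ selObj N f K ∅ 0 m Bu) ∧
    (∀ U ⊆ Bu, U.card = m → (∀ n ∈ N, topKSum (f n) K U = topKSum (f n) K Bu) →
      selObj N f K ∅ 0 m U = selObj N f K ∅ 0 m Bu) ∧
    (∃ U ⊆ Bu, U.card = m ∧ ∀ n ∈ N, topKSum (f n) K U = topKSum (f n) K Bu) := by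
  have hobj (U : Finset β) :
      selObj N f K ∅ 0 m U = 1 / ((N.card : ℝ) * K) * ∑ n ∈ N, topKSum (f n) K U := by
    simp [selObj]
  simp only [hobj]
  refine ⟨fun U hU _ => ?_, fun U _ _ hU => by rw [Finset.sum_congr rfl hU],
    exists_subset_card_eq_forall_topKSum_eq N f K hf hm1 hm2⟩
  gcongr with n hn
  exact topKSum_mono _ K hU (hf n hn)

/-- For `λ = 0`, `B_s = ∅` and `K·|N| ≤ m ≤ |B_u|`, the maximum of `h` over subsets
of `B_u` of cardinality `m` equals `h(B_u)`: every feasible `U` has `h(U) ≤ h(B_u)`,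
any feasible `U` with `M^K(n,U) = M^K(n,B_u)` for all `n ∈ N` attains `h(B_u)`,
and such a `U` exists (it is produced by the greedy algorithm on novel classes). -/
theorem selObj_max_eq_of_large_m {β ν : Type*} [DecidableEq β]
    (Bu : Finset β) (N : Finset ν) (f : ν → β → ℝ) (K m : ℕ)
    (hBu : Bu.Nonempty) (hN : N.Nonempty) (hK : 1 ≤ K)
    (hf : ∀ n ∈ N, ∀ b ∈ Bu, 0 ≤ f n b)
    (hm1 : K * N.card ≤ m) (hm2 : m ≤ Bu.card) :
    (∀ U ⊆ Bu, U.card = m → selObj N f K ∅ 0 m U ≤ selObj N f K ∅ 0 m Bu) ∧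
    (∀ U ⊆ Bu, U.card = m → (∀ n ∈ N, topKSum (f n) K U = topKSum (f n) K Bu) →
      selObj N f K ∅ 0 m U = selObj N f K ∅ 0 m Bu) ∧
    (∃ U ⊆ Bu, U.card = m ∧ ∀ n ∈ N, topKSum (f n) K U = topKSum (f n) K Bu) :=
  selObj_max_eq_of_large_m_general Bu N f K m hf hm1 hm2
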